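/- Let A ∈ ℂ^{n×n} and let p_max denote the maximum over all eigenvalues λ of A of the geometric multiplicity dim ker(λI − A). Then there exists C ∈ ℂ^{m×n} with (A, C) observable in the PBH sense if and only if m ≥ p_max. -/

import Mathlib

/-!
The PBH test fails at `λ` exactly when `C` kills a nonzero vector of `ker (λI − A)`, so
observability says that `ker C` meets every eigenspace of `A` trivially. Then `C` is injective on
each eigenspace, which forces `m ≥ p_max`. Conversely, since a vector space over the infinite
field `ℂ` is not a finite union of proper subspaces, one can grow a subspace `W` of dimension
`n − m` one vector at a time so that it stays disjoint from each of the finitely many eigenspaces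
(each of dimension `≤ m`); any `C : ℂⁿ → ℂᵐ` with kernel `W` then makes `(A, C)` observable.
-/

open Matrix

/-- A complex matrix has full column rank iff `mulVec` is injective. -/
def FullColRank {m n : Type*} [Fintype n] (M : Matrix m n ℂ) : Prop :=
  ∀ x : n → ℂ, M.mulVec x = 0 → x = 0

/-- PBH observability: col(λI − A, C) has full column rank for every λ ∈ ℂ. -/
def Observable {n m : Type*} [Fintype n] [DecidableEq n]
    (A : Matrix n n ℂ) (C : Matrix m n ℂ) : Prop :=
  ∀ l : ℂ, FullColRank (Matrix.fromRows (l • (1 : Matrix n n ℂ) - A) C)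

section

open Module

variable {K E F : Type*} [Field K] [AddCommGroup E] [Module K E] [AddCommGroup F] [Module K F]

namespace Submodule

theorem finrank_le_of_disjoint_ker [FiniteDimensional K F] {V : Submodule K E} {f : E →ₗ[K] F}
    (h : Disjoint V (LinearMap.ker f)) : finrank K V ≤ finrank K F :=
  LinearMap.finrank_le_finrank_of_injective (LinearMap.injective_domRestrict_iff.2 h)

theorem exists_linearMap_ker_eq [FiniteDimensional K E] [FiniteDimensional K F]
    (W : Submodule K E) (h : finrank K E ≤ finrank K W + finrank K F) :
    ∃ f : E →ₗ[K] F, LinearMap.ker f = W := by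
  have hquot : finrank K (E ⧸ W) ≤ finrank K F := by
    have := W.finrank_quotient_add_finrank
    omega
  obtain ⟨g, hg⟩ := finrank_le_iff_exists_linearMap.1 hquot
  exact ⟨g ∘ₗ W.mkQ, by
    rw [LinearMap.ker_comp_of_ker_eq_bot _ (LinearMap.ker_eq_bot.2 hg), ker_mkQ]⟩

variable [Infinite K] {ι : Type*} [Finite ι]

theorem exists_forall_notMem_of_ne_top {p : ι → Submodule K E} (h : ∀ i, p i ≠ ⊤) :
    ∃ v, ∀ i, v ∉ p i := by
  by_contra! hcover
  obtain ⟨i, hi⟩ := Subspace.exists_eq_top_of_iUnion_eq_univ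
    (Set.eq_univ_of_forall fun v => Set.mem_iUnion.2 (hcover v))
  exact h i hi

theorem exists_notMem_forall_disjoint_sup_span_singleton {W : Submodule K E}
    {V : ι → Submodule K E} (hW : W ≠ ⊤) (hWV : ∀ i, W ⊔ V i ≠ ⊤)
    (hdisj : ∀ i, Disjoint W (V i)) :
    ∃ v ∉ W, ∀ i, Disjoint (W ⊔ span K {v}) (V i) := by
  obtain ⟨v, hv⟩ := exists_forall_notMem_of_ne_top (p := fun o : Option ι => o.elim W (W ⊔ V ·))
    (by rintro (_ | i); exacts [hW, hWV i])
  refine ⟨v, hv none, fun i => ?_⟩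
  -- `span {v}` meets `W ⊔ V i` trivially, and the lattice of subspaces is modular.
  rw [sup_comm]
  exact (hdisj i).disjoint_sup_left_of_disjoint_sup_right
    (disjoint_span_singleton_of_notMem (hv (some i))).symm

theorem exists_finrank_eq_forall_disjoint [FiniteDimensional K E] (V : ι → Submodule K E)
    (d : ℕ) (hd : d ≤ finrank K E) (hV : ∀ i, d + finrank K (V i) ≤ finrank K E) :
    ∃ W : Submodule K E, finrank K W = d ∧ ∀ i, Disjoint W (V i) := by
  induction d with
  | zero => exact ⟨⊥, finrank_bot K E, fun _ => disjoint_bot_left⟩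
  | succ d ih =>
    obtain ⟨W, hWd, hWV⟩ := ih (by omega) fun i => by have := hV i; omega
    have hW : W ≠ ⊤ := fun h => by rw [h, finrank_top] at hWd; omega
    have hWVi : ∀ i, W ⊔ V i ≠ ⊤ := fun i h => by
      have := finrank_add_le_finrank_add_finrank W (V i)
      rw [h, finrank_top] at this
      have := hV i
      omega
    obtain ⟨v, hvW, hv⟩ := exists_notMem_forall_disjoint_sup_span_singleton hW hWVi hWV
    exact ⟨W ⊔ span K {v}, by rw [finrank_sup_span_singleton hvW, hWd], hv⟩

end Submodule

namespace Module.End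

theorem exists_linearMap_forall_disjoint_eigenspace [Infinite K] [FiniteDimensional K E]
    [FiniteDimensional K F] (f : End K E) (h : ∀ μ, finrank K (eigenspace f μ) ≤ finrank K F) :
    ∃ g : E →ₗ[K] F, ∀ μ, Disjoint (eigenspace f μ) (LinearMap.ker g) := by
  have : Finite {μ // f.HasEigenvalue μ} := f.finite_hasEigenvalue.to_subtype
  obtain ⟨W, hWd, hW⟩ := Submodule.exists_finrank_eq_forall_disjoint
    (fun μ : {μ // f.HasEigenvalue μ} => eigenspace f μ) (finrank K E - finrank K F)
    (Nat.sub_le _ _) fun μ => by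
      have := (eigenspace f μ).finrank_le
      have := h μ
      omega
  obtain ⟨g, rfl⟩ := Submodule.exists_linearMap_ker_eq (F := F) W (by omega)
  refine ⟨g, fun μ => ?_⟩
  by_cases hμ : f.HasEigenvalue μ
  · exact (hW ⟨μ, hμ⟩).symm
  · rw [hasEigenvalue_iff, not_not] at hμ
    rw [hμ]
    exact disjoint_bot_left

end Module.End

end

namespace Matrix

variable {m n : Type*} [Fintype n]

theorem ker_smul_one_sub_mulVecLin {R : Type*} [CommRing R] [DecidableEq n] (A : Matrix n n R)
    (l : R) :
    LinearMap.ker (l • (1 : Matrix n n R) - A).mulVecLin =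
      Module.End.eigenspace A.mulVecLin l := by
  ext x
  rw [LinearMap.mem_ker, Module.End.mem_eigenspace_iff, mulVecLin_apply, mulVecLin_apply,
    sub_mulVec, smul_mulVec, one_mulVec, sub_eq_zero, eq_comm]

theorem fullColRank_fromRows_iff {m' : Type*} (M : Matrix m n ℂ) (N : Matrix m' n ℂ) :
    FullColRank (fromRows M N) ↔
      Disjoint (LinearMap.ker M.mulVecLin) (LinearMap.ker N.mulVecLin) := by
  simp [FullColRank, Submodule.disjoint_def, fromRows_mulVec, funext_iff, Sum.forall]

theorem observable_iff_forall_disjoint_eigenspace [DecidableEq n] (A : Matrix n n ℂ)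
    (C : Matrix m n ℂ) :
    Observable A C ↔
      ∀ l, Disjoint (Module.End.eigenspace A.mulVecLin l) (LinearMap.ker C.mulVecLin) := by
  simp only [Observable, fullColRank_fromRows_iff, ker_smul_one_sub_mulVecLin]

end Matrix

/-- there exists C ∈ ℂ^{m×n} with (A, C) PBH-observable iff
m ≥ p_max, the maximum geometric multiplicity of the eigenvalues of A. -/
theorem stmt17 (n m : ℕ) (A : Matrix (Fin n) (Fin n) ℂ) (pmax : ℕ)
    (hpmax : IsGreatest
      {k : ℕ | ∃ l : ℂ, k = Module.finrank ℂ
        (LinearMap.ker ((l • (1 : Matrix (Fin n) (Fin n) ℂ) - A).mulVecLin))} pmax) :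
    (∃ C : Matrix (Fin m) (Fin n) ℂ, Observable A C) ↔ pmax ≤ m := by
  have hker (l : ℂ) := (LinearEquiv.ofEq _ _ (Matrix.ker_smul_one_sub_mulVecLin A l)).finrank_eq
  simp only [hker] at hpmax
  constructor
  · rintro ⟨C, hC⟩
    obtain ⟨l, rfl⟩ := hpmax.1
    simpa using Submodule.finrank_le_of_disjoint_ker
      ((Matrix.observable_iff_forall_disjoint_eigenspace A C).1 hC l)
  · intro hm
    obtain ⟨g, hg⟩ := Module.End.exists_linearMap_forall_disjoint_eigenspace (F := Fin m → ℂ)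
      A.mulVecLin fun l => by simpa using (hpmax.2 ⟨l, rfl⟩).trans hm
    refine ⟨LinearMap.toMatrix' g, (Matrix.observable_iff_forall_disjoint_eigenspace _ _).2 ?_⟩
    rwa [← Matrix.toLin'_apply' (LinearMap.toMatrix' g), Matrix.toLin'_toMatrix']
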